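/- Let c > 0 and 0 < σ ≤ s, and let u : [σ, s] → (0, r] be an absolutely continuous positive function satisfying the differential inequality u'(t)/tanh(u(t)) ≥ c²/tanh(t) for almost every t. Then log(sinh s) ≤ c⁻² (log(sinh r) − log(sinh u(σ))) + log(sinh σ). In particular, s is bounded above by a quantity depending only on c, r, σ, and u(σ). -/

import Mathlib

/-- Inequality (6.1): if `u : [σ,s] → (0,r]` satisfies `u'(t)/tanh(u t) ≥ c²/tanh t`, then
`log (sinh s) ≤ c⁻² (log (sinh r) − log (sinh (u σ))) + log (sinh σ)`. -/
theorem stmt3 (c σ s r : ℝ) (hc : 0 < c) (hσ : 0 < σ) (hσs : σ ≤ s) (hr : 0 < r)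
    (u u' : ℝ → ℝ)
    (hderiv : ∀ t ∈ Set.Icc σ s, HasDerivAt u (u' t) t)
    (hpos : ∀ t ∈ Set.Icc σ s, 0 < u t)
    (hle : ∀ t ∈ Set.Icc σ s, u t ≤ r)
    (hineq : ∀ t ∈ Set.Icc σ s, c ^ 2 / Real.tanh t ≤ u' t / Real.tanh (u t)) :
    Real.log (Real.sinh s) ≤
      (c ^ 2)⁻¹ * (Real.log (Real.sinh r) - Real.log (Real.sinh (u σ))) +
        Real.log (Real.sinh σ) := by
  set F : ℝ → ℝ := fun t => Real.log (Real.sinh (u t)) - c ^ 2 * Real.log (Real.sinh t)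
    with hF
  have hσmem : σ ∈ Set.Icc σ s := ⟨le_refl σ, hσs⟩
  have hsmem : s ∈ Set.Icc σ s := ⟨hσs, le_refl s⟩
  have hFd : ∀ t ∈ Set.Icc σ s, HasDerivAt F
      (u' t * Real.cosh (u t) / Real.sinh (u t) - c ^ 2 * (Real.cosh t / Real.sinh t)) t := by
    intro t ht
    have htpos : 0 < t := lt_of_lt_of_le hσ ht.1
    have hsinht : Real.sinh t ≠ 0 := ne_of_gt (Real.sinh_pos_iff.2 htpos)
    have hsinhu : Real.sinh (u t) ≠ 0 := ne_of_gt (Real.sinh_pos_iff.2 (hpos t ht))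
    have h1 : HasDerivAt (fun t => Real.log (Real.sinh (u t)))
        (u' t * Real.cosh (u t) / Real.sinh (u t)) t := by
      have := ((hderiv t ht).sinh).log hsinhu
      convert this using 1
      ring
    have h2 : HasDerivAt (fun t => Real.log (Real.sinh t)) (Real.cosh t / Real.sinh t) t :=
      (Real.hasDerivAt_sinh t).log hsinht
    exact h1.sub (h2.const_mul (c ^ 2))
  have hFd' : ∀ t ∈ Set.Icc σ s,
      0 ≤ u' t * Real.cosh (u t) / Real.sinh (u t) - c ^ 2 * (Real.cosh t / Real.sinh t) := by
    intro t ht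
    have htpos : 0 < t := lt_of_lt_of_le hσ ht.1
    have hsinht : 0 < Real.sinh t := Real.sinh_pos_iff.2 htpos
    have hsinhu : 0 < Real.sinh (u t) := Real.sinh_pos_iff.2 (hpos t ht)
    have hcosht : 0 < Real.cosh t := Real.cosh_pos t
    have hcoshu : 0 < Real.cosh (u t) := Real.cosh_pos (u t)
    have h := hineq t ht
    rw [Real.tanh_eq_sinh_div_cosh, Real.tanh_eq_sinh_div_cosh] at h
    rw [div_div_eq_mul_div, div_div_eq_mul_div, mul_div_assoc] at h
    linarith [h]
  have hFmono : MonotoneOn F (Set.Icc σ s) := by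
    have hconv : Convex ℝ (Set.Icc σ s) := convex_Icc σ s
    have hcont : ContinuousOn F (Set.Icc σ s) := fun t ht =>
      (hFd t ht).continuousAt.continuousWithinAt
    have hdiff : DifferentiableOn ℝ F (interior (Set.Icc σ s)) := fun t ht =>
      ((hFd t (interior_subset ht)).differentiableAt).differentiableWithinAt
    apply monotoneOn_of_deriv_nonneg hconv hcont hdiff
    intro t ht
    rw [(hFd t (interior_subset ht)).deriv]
    exact hFd' t (interior_subset ht)
  have key : F σ ≤ F s := hFmono hσmem hsmem hσs
  have husle : Real.log (Real.sinh (u s)) ≤ Real.log (Real.sinh r) := by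
    apply Real.log_le_log (Real.sinh_pos_iff.2 (hpos s hsmem))
    exact Real.sinh_le_sinh.2 (hle s hsmem)
  have hc2 : (0:ℝ) < c ^ 2 := by positivity
  have hcc : c ^ 2 * (c ^ 2)⁻¹ = 1 := mul_inv_cancel₀ (ne_of_gt hc2)
  simp only [hF] at key
  have h1 : c ^ 2 * Real.log (Real.sinh s) ≤
      Real.log (Real.sinh r) - Real.log (Real.sinh (u σ)) + c ^ 2 * Real.log (Real.sinh σ) := by
    linarith
  calc Real.log (Real.sinh s) = (c ^ 2)⁻¹ * (c ^ 2 * Real.log (Real.sinh s)) := by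
        field_simp
    _ ≤ (c ^ 2)⁻¹ * (Real.log (Real.sinh r) - Real.log (Real.sinh (u σ)) +
          c ^ 2 * Real.log (Real.sinh σ)) :=
        mul_le_mul_of_nonneg_left h1 (le_of_lt (inv_pos.2 hc2))
    _ = (c ^ 2)⁻¹ * (Real.log (Real.sinh r) - Real.log (Real.sinh (u σ))) +
          Real.log (Real.sinh σ) := by
        field_simp
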